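/- If f is operator convex on (0,∞), then the transpose function g(x) = x · f(1/x) is also operator convex on (0,∞). -/

import Mathlib

open Matrix Kronecker
open scoped ComplexOrder

noncomputable def applyFun {n : Type*} [Fintype n] [DecidableEq n]
    (f : ℝ → ℝ) (A : Matrix n n ℂ) : Matrix n n ℂ := by
  classical exact
    if hA : A.IsHermitian then
      (hA.eigenvectorUnitary : Matrix n n ℂ) *
        Matrix.diagonal (fun i => (f (hA.eigenvalues i) : ℂ)) *
        (star (hA.eigenvectorUnitary : Matrix n n ℂ))
    else 0

noncomputable def msqrt {n : Type*} [Fintype n] [DecidableEq n]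
    (A : Matrix n n ℂ) : Matrix n n ℂ := by
  classical exact if h : A.PosSemidef then
    (h.1.eigenvectorUnitary : Matrix n n ℂ) *
      Matrix.diagonal ((↑) ∘ (√·) ∘ h.1.eigenvalues) *
      (star (h.1.eigenvectorUnitary : Matrix n n ℂ)) else 0

def vecOf {m n : Type*} (A : Matrix m n ℂ) : m × n → ℂ := fun p => A p.1 p.2

noncomputable def Srel {n : Type*} [Fintype n] [DecidableEq n]
    (f : ℝ → ℝ) (ρ σ : Matrix n n ℂ) : ℝ :=
  (star (vecOf (msqrt ρ)) ⬝ᵥ (applyFun f (σ ⊗ₖ (ρ⁻¹)ᵀ) *ᵥ vecOf (msqrt ρ))).re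

def OperatorConvexOn (I : Set ℝ) (f : ℝ → ℝ) : Prop :=
  ∀ (n : ℕ) (A B : Matrix (Fin n) (Fin n) ℂ) (hA : A.IsHermitian) (hB : B.IsHermitian),
    (∀ i, hA.eigenvalues i ∈ I) → (∀ i, hB.eigenvalues i ∈ I) →
    ∀ lam : ℝ, 0 ≤ lam → lam ≤ 1 →
      ((lam : ℂ) • applyFun f A + ((1 - lam : ℝ) : ℂ) • applyFun f B -
        applyFun f ((lam : ℂ) • A + ((1 - lam : ℝ) : ℂ) • B)).PosSemidef

noncomputable def entf {n : Type*} [Fintype n] [DecidableEq n]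
    (f : ℝ → ℝ) (ρ : Matrix n n ℂ) : ℝ :=
  -(Matrix.trace (ρ * applyFun f ρ⁻¹)).re

noncomputable def ptraceB {α β : Type*} [Fintype β]
    (M : Matrix (α × β) (α × β) ℂ) : Matrix α α ℂ :=
  Matrix.of fun i j => ∑ k, M (i, k) (j, k)

noncomputable def ptraceA {α β : Type*} [Fintype α]
    (M : Matrix (α × β) (α × β) ℂ) : Matrix β β ℂ :=
  Matrix.of fun i j => ∑ k, M (k, i) (k, j)

def NonAffineOn (I : Set ℝ) (f : ℝ → ℝ) : Prop :=
  ¬ ∃ c b : ℝ, ∀ t ∈ I, f t = c * t + b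

/-!
The transpose is `g(A) = A^{1/2} f(A⁻¹) A^{1/2}` for positive definite `A`. Operator convexity of
`f` yields Jensen's operator inequality `f(X*AX + Y*BY) ≤ X* f(A) X + Y* f(B) Y` whenever
`[[X, Z₁], [Y, Z₂]]` is unitary: conjugate `diag(A, B)` by this unitary and average the result with
its conjugate by `diag(1, -1)`, which removes the off-diagonal blocks. For `C = tA + (1-t)B`, the
matrices `X = √t A^{1/2} C^{-1/2}` and `Y = √(1-t) B^{1/2} C^{-1/2}` satisfy `X*X + Y*Y = 1` and
`X* A⁻¹ X + Y* B⁻¹ Y = C⁻¹`, so Jensen's inequality for `A⁻¹, B⁻¹`, conjugated by `C^{1/2}`, reads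
`g(C) ≤ t g(A) + (1-t) g(B)`.
-/

theorem Set.Finite.exists_eqOn_eval {F : Type*} [Field F] {s : Set F} (hs : s.Finite) (f : F → F) :
    ∃ p : Polynomial F, s.EqOn f p.eval := by
  have : Finite s := hs
  obtain ⟨p, hp⟩ := (Polynomial.exists_eval_eq_iff (fun x : s => (x : F)) (fun x => f x)).mpr
    fun i j hij => by rw [Subtype.ext hij]
  exact ⟨p, fun x hx => (hp ⟨x, hx⟩).symm⟩

namespace Matrix

open Polynomial

section Blocks

variable {n m : Type*} [Fintype n] [DecidableEq n] [Fintype m] [DecidableEq m]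

variable (R α : Type*) [CommSemiring R] [Semiring α] [Algebra R α] in
def fromBlocksDiagAlgHom : Matrix n n α × Matrix m m α →ₐ[R] Matrix (n ⊕ m) (n ⊕ m) α where
  toFun x := fromBlocks x.1 0 0 x.2
  map_one' := fromBlocks_one
  map_mul' x y := by simp [fromBlocks_multiply]
  map_zero' := fromBlocks_zero
  map_add' x y := by simp [fromBlocks_add]
  commutes' r := by simp [Algebra.algebraMap_eq_smul_one, ← fromBlocks_one, fromBlocks_smul]

variable (R α : Type*) [CommSemiring R] [Semiring α] [StarRing α] [Algebra R α] in
def reindexStarAlgEquiv (e : m ≃ n) : Matrix m m α ≃⋆ₐ[R] Matrix n n α :=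
  { reindexAlgEquiv R α e with
    map_smul' := map_smul (reindexAlgEquiv R α e)
    map_star' := fun A => (conjTranspose_submatrix A e.symm e.symm).symm }

theorem spectrum_fromBlocks_zero_subset {R α : Type*} [CommSemiring R] [Ring α] [Algebra R α]
    (A : Matrix n n α) (B : Matrix m m α) :
    spectrum R (fromBlocks A 0 0 B) ⊆ spectrum R A ∪ spectrum R B :=
  Prod.spectrum_eq (R := R) A B ▸
    AlgHom.spectrum_apply_subset (fromBlocksDiagAlgHom R α : _ →ₐ[R] _) (A, B)

theorem aeval_fromBlocks_zero {R α : Type*} [CommSemiring R] [Semiring α] [Algebra R α]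
    (A : Matrix n n α) (B : Matrix m m α) (p : R[X]) :
    aeval (fromBlocks A 0 0 B) p = fromBlocks (aeval A p) 0 0 (aeval B p) :=
  (aeval_algHom_apply (fromBlocksDiagAlgHom R α) (A, B) p).trans (by rw [aeval_prod_apply]; rfl)

variable {𝕜 : Type*} [RCLike 𝕜]

theorem fromBlocks_one_neg_one_mem_unitary :
    fromBlocks (1 : Matrix n n 𝕜) 0 0 (-1 : Matrix m m 𝕜) ∈ unitary (Matrix (n ⊕ m) (n ⊕ m) 𝕜) := by
  rw [Unitary.mem_iff]
  simp [star_eq_conjTranspose, fromBlocks_conjTranspose, fromBlocks_multiply, ← fromBlocks_one]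

theorem half_smul_add_half_smul_conj (M : Matrix (n ⊕ m) (n ⊕ m) 𝕜) :
    (1 / 2 : ℝ) • M + (1 - 1 / 2 : ℝ) •
        (star (fromBlocks 1 0 0 (-1)) * M * fromBlocks 1 0 0 (-1)) =
      fromBlocks M.toBlocks₁₁ 0 0 M.toBlocks₂₂ := by
  conv_lhs => rw [← fromBlocks_toBlocks M]
  norm_num [star_eq_conjTranspose, fromBlocks_conjTranspose, fromBlocks_multiply, fromBlocks_smul,
    fromBlocks_add, ← add_smul]

end Blocks

section FunctionalCalculus

variable {n m 𝕜 : Type*} [Fintype n] [DecidableEq n] [Fintype m] [DecidableEq m] [RCLike 𝕜]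

-- Off Hermitian matrices both sides are `0`.
theorem applyFun_eq_cfc (f : ℝ → ℝ) (A : Matrix n n ℂ) : applyFun f A = cfc f A := by
  by_cases hA : A.IsHermitian
  · rw [hA.cfc_eq, IsHermitian.cfc, Unitary.conjStarAlgAut_apply, applyFun, dif_pos hA]
    rfl
  · rw [applyFun, dif_neg hA]
    exact (cfc_apply_of_not_predicate A hA).symm

theorem IsHermitian.map_cfc {F : Type*} [FunLike F (Matrix n n 𝕜) (Matrix m m 𝕜)]
    [AlgHomClass F ℝ (Matrix n n 𝕜) (Matrix m m 𝕜)] [StarHomClass F (Matrix n n 𝕜) (Matrix m m 𝕜)]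
    {A : Matrix n n 𝕜} (hA : A.IsHermitian) (φ : F) (f : ℝ → ℝ) : φ (cfc f A) = cfc f (φ A) :=
  StarAlgHomClass.map_cfc (S := ℝ) φ f A (A.finite_real_spectrum.continuousOn f)
    (φ : Matrix n n 𝕜 →ₐ[ℝ] Matrix m m 𝕜).toLinearMap.continuous_of_finiteDimensional
    hA.isSelfAdjoint (hA.isSelfAdjoint.map φ)

theorem IsHermitian.cfc_star_mul_mul {A U : Matrix n n 𝕜} (hA : A.IsHermitian)
    (hU : U ∈ unitary (Matrix n n 𝕜)) (f : ℝ → ℝ) :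
    cfc f (star U * A * U) = star U * cfc f A * U := by
  simpa using (hA.map_cfc (Unitary.conjStarAlgAut ℝ (Matrix n n 𝕜) (star ⟨U, hU⟩)) f).symm

theorem IsHermitian.cfc_eq_aeval {A : Matrix n n 𝕜} (hA : A.IsHermitian) {f : ℝ → ℝ} {p : ℝ[X]}
    (hp : (spectrum ℝ A).EqOn f p.eval) : cfc f A = aeval A p := by
  rw [cfc_congr hp, cfc_polynomial p A hA.isSelfAdjoint]

theorem cfc_fromBlocks_zero {A : Matrix n n 𝕜} {B : Matrix m m 𝕜} (hA : A.IsHermitian)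
    (hB : B.IsHermitian) (f : ℝ → ℝ) :
    cfc f (fromBlocks A 0 0 B) = fromBlocks (cfc f A) 0 0 (cfc f B) := by
  obtain ⟨p, hp⟩ := (A.finite_real_spectrum.union B.finite_real_spectrum).exists_eqOn_eval f
  rw [hA.cfc_eq_aeval (hp.mono Set.subset_union_left),
    hB.cfc_eq_aeval (hp.mono Set.subset_union_right),
    (hA.fromBlocks (by simp) hB).cfc_eq_aeval (hp.mono (spectrum_fromBlocks_zero_subset A B)),
    aeval_fromBlocks_zero]

end FunctionalCalculus

end Matrix

theorem operatorConvexOn_iff {I : Set ℝ} {f : ℝ → ℝ} : OperatorConvexOn I f ↔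
    ∀ (ι : Type) [Fintype ι] [DecidableEq ι] (A B : Matrix ι ι ℂ), A.IsHermitian → B.IsHermitian →
      spectrum ℝ A ⊆ I → spectrum ℝ B ⊆ I → ∀ t : ℝ, 0 ≤ t → t ≤ 1 →
        (t • cfc f A + (1 - t) • cfc f B - cfc f (t • A + (1 - t) • B)).PosSemidef := by
  constructor
  · intro hf ι _ _ A B hA hB hAI hBI t ht0 ht1
    let φ := reindexStarAlgEquiv ℝ ℂ (Fintype.equivFin ι)
    have hφA : (φ A).IsHermitian := hA.isSelfAdjoint.map φ
    have hφB : (φ B).IsHermitian := hB.isSelfAdjoint.map φ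
    have hC : (t • A + (1 - t) • B).IsHermitian :=
      ((IsSelfAdjoint.all t).smul hA.isSelfAdjoint).add
        ((IsSelfAdjoint.all _).smul hB.isSelfAdjoint)
    have key := hf _ (φ A) (φ B) hφA hφB
      (fun i => hAI (AlgEquiv.spectrum_eq φ A ▸ hφA.eigenvalues_mem_spectrum_real i))
      (fun i => hBI (AlgEquiv.spectrum_eq φ B ▸ hφB.eigenvalues_mem_spectrum_real i)) t ht0 ht1
    simp only [applyFun_eq_cfc, Complex.coe_smul] at key
    rw [← hA.map_cfc φ, ← hB.map_cfc φ, ← map_smul, ← map_smul, ← map_smul, ← map_smul,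
      ← map_add, ← map_add, ← hC.map_cfc φ, ← map_sub] at key
    exact (posSemidef_submatrix_equiv _).mp key
  · intro h n A B hA hB hAI hBI t ht0 ht1
    have hI {A : Matrix (Fin n) (Fin n) ℂ} (hA : A.IsHermitian) (hAI : ∀ i, hA.eigenvalues i ∈ I) :
        spectrum ℝ A ⊆ I := by
      rw [hA.spectrum_real_eq_range_eigenvalues]
      rintro _ ⟨i, rfl⟩
      exact hAI i
    simpa only [applyFun_eq_cfc, Complex.coe_smul] using
      h _ A B hA hB (hI hA hAI) (hI hB hBI) t ht0 ht1

namespace OperatorConvexOn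

variable {n m : Type} [Fintype n] [DecidableEq n] [Fintype m] [DecidableEq m] {I : Set ℝ}
  {f : ℝ → ℝ}

theorem posSemidef_toBlocks₁₁_sub (hf : OperatorConvexOn I f) {M : Matrix (n ⊕ m) (n ⊕ m) ℂ}
    (hM : M.IsHermitian) (hMI : spectrum ℝ M ⊆ I) :
    ((cfc f M).toBlocks₁₁ - cfc f M.toBlocks₁₁).PosSemidef := by
  have hΘ := fromBlocks_one_neg_one_mem_unitary (n := n) (m := m) (𝕜 := ℂ)
  have hM' : (star (fromBlocks 1 0 0 (-1)) * M * fromBlocks 1 0 0 (-1)).IsHermitian :=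
    hM.isSelfAdjoint.conjugate' _
  have h₁₁ : M.toBlocks₁₁.IsHermitian := hM.submatrix Sum.inl
  have h₂₂ : M.toBlocks₂₂.IsHermitian := hM.submatrix Sum.inr
  have key := operatorConvexOn_iff.mp hf _ M _ hM hM' hMI
    (by rwa [Unitary.spectrum_star_left_conjugate (U := ⟨_, hΘ⟩)])
    (1 / 2) (by norm_num) (by norm_num)
  rw [hM.cfc_star_mul_mul hΘ, half_smul_add_half_smul_conj, half_smul_add_half_smul_conj,
    cfc_fromBlocks_zero h₁₁ h₂₂] at key
  exact key.submatrix Sum.inl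

theorem posSemidef_jensen (hf : OperatorConvexOn I f) {A B X Y Z₁ Z₂ : Matrix n n ℂ}
    (hW : fromBlocks X Z₁ Y Z₂ ∈ unitary (Matrix (n ⊕ n) (n ⊕ n) ℂ)) (hA : A.IsHermitian)
    (hB : B.IsHermitian) (hAI : spectrum ℝ A ⊆ I) (hBI : spectrum ℝ B ⊆ I) :
    (star X * cfc f A * X + star Y * cfc f B * Y -
      cfc f (star X * A * X + star Y * B * Y)).PosSemidef := by
  have hAB : (fromBlocks A 0 0 B).IsHermitian := hA.fromBlocks (by simp) hB
  have key := hf.posSemidef_toBlocks₁₁_sub (hAB.isSelfAdjoint.conjugate' _) (by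
    rw [Unitary.spectrum_star_left_conjugate (U := ⟨_, hW⟩)]
    exact (spectrum_fromBlocks_zero_subset A B).trans (Set.union_subset hAI hBI))
  rw [hAB.cfc_star_mul_mul hW, cfc_fromBlocks_zero hA hB] at key
  simpa [star_eq_conjTranspose, fromBlocks_conjTranspose, fromBlocks_multiply] using key

end OperatorConvexOn

namespace Matrix

variable {n 𝕜 : Type*} [Fintype n] [DecidableEq n] [RCLike 𝕜]

theorem posDef_iff_isHermitian_and_spectrum_subset_Ioi {A : Matrix n n 𝕜} :
    A.PosDef ↔ A.IsHermitian ∧ spectrum ℝ A ⊆ Set.Ioi 0 := by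
  refine ⟨fun hA => ⟨hA.1, ?_⟩, fun ⟨hA, hAI⟩ =>
    hA.posDef_iff_eigenvalues_pos.mpr fun i => hAI (hA.eigenvalues_mem_spectrum_real i)⟩
  rw [hA.1.spectrum_real_eq_range_eigenvalues]
  rintro _ ⟨i, rfl⟩
  exact hA.eigenvalues_pos i

omit [Fintype n] [DecidableEq n] in
theorem PosDef.smul_add_one_sub_smul {A B : Matrix n n 𝕜} (hA : A.PosDef) (hB : B.PosDef) {t : ℝ}
    (ht0 : 0 ≤ t) (ht1 : t ≤ 1) : (t • A + (1 - t) • B).PosDef := by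
  rcases ht1.lt_or_eq with ht1 | rfl
  · exact .posSemidef_add (hA.posSemidef.smul ht0) (hB.smul (sub_pos.mpr ht1))
  · simpa using hA

theorem PosDef.cfc_rpow_mul_cfc_rpow {A : Matrix n n 𝕜} (hA : A.PosDef) (r s : ℝ) :
    cfc (fun x : ℝ => x ^ r) A * cfc (fun x : ℝ => x ^ s) A =
      cfc (fun x : ℝ => x ^ (r + s)) A := by
  have hAI := (posDef_iff_isHermitian_and_spectrum_subset_Ioi.mp hA).2
  rw [← cfc_mul _ _ A (A.finite_real_spectrum.continuousOn _)
    (A.finite_real_spectrum.continuousOn _)]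
  exact cfc_congr fun x hx => (Real.rpow_add (hAI hx) r s).symm

theorem PosDef.cfc_rpow_mul_mul_cfc_rpow {C : Matrix n n 𝕜} (hC : C.PosDef) (r s : ℝ) :
    cfc (fun x : ℝ => x ^ r) C * C * cfc (fun x : ℝ => x ^ s) C =
      cfc (fun x : ℝ => x ^ (r + 1 + s)) C := by
  have h1 : cfc (fun x : ℝ => x ^ (1 : ℝ)) C = C := by
    simpa using cfc_id' ℝ C hC.1.isSelfAdjoint
  conv_lhs => arg 1; arg 2; rw [← h1]
  rw [hC.cfc_rpow_mul_cfc_rpow, hC.cfc_rpow_mul_cfc_rpow]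

theorem PosDef.cfc_rpow {A : Matrix n n 𝕜} (hA : A.PosDef) (r : ℝ) :
    (cfc (fun x : ℝ => x ^ r) A).PosDef := by
  have hAI := (posDef_iff_isHermitian_and_spectrum_subset_Ioi.mp hA).2
  refine posDef_iff_isHermitian_and_spectrum_subset_Ioi.mpr ⟨cfc_predicate _ A, ?_⟩
  rw [cfc_map_spectrum _ A (ha := hA.1.isSelfAdjoint) (hf := A.finite_real_spectrum.continuousOn _)]
  rintro _ ⟨x, hx, rfl⟩
  exact Real.rpow_pos_of_pos (hAI hx) r

theorem PosDef.cfc_mul_apply_one_div {A : Matrix n n 𝕜} (hA : A.PosDef) (f : ℝ → ℝ) :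
    cfc (fun x => x * f (1 / x)) A =
      cfc (fun x : ℝ => x ^ (1 / 2 : ℝ)) A * cfc f (cfc (fun x : ℝ => x ^ (-1 : ℝ)) A) *
        cfc (fun x : ℝ => x ^ (1 / 2 : ℝ)) A := by
  have hAI := (posDef_iff_isHermitian_and_spectrum_subset_Ioi.mp hA).2
  have hc (g : ℝ → ℝ) : ContinuousOn g (spectrum ℝ A) := A.finite_real_spectrum.continuousOn g
  rw [← cfc_comp' f _ A ((A.finite_real_spectrum.image _).continuousOn f) (hc _) hA.1.isSelfAdjoint,
    ← cfc_mul _ _ A (hc _) (hc _), ← cfc_mul _ _ A (hc _) (hc _)]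
  refine cfc_congr fun x hx => ?_
  have hx : 0 < x := hAI hx
  simp only [Real.rpow_neg_one, one_div]
  rw [mul_comm _ (x ^ _), ← mul_assoc, ← Real.rpow_add hx]
  norm_num

/-- The `X` and `Y` of the proof idea are `perspectiveFactor (1/2) t A C` and
`perspectiveFactor (1/2) (1 - t) B C`. -/
noncomputable def perspectiveFactor (r t : ℝ) (A C : Matrix n n 𝕜) : Matrix n n 𝕜 :=
  √t • (cfc (fun x : ℝ => x ^ r) A * cfc (fun x : ℝ => x ^ (-1 / 2 : ℝ)) C)

theorem star_perspectiveFactor (r t : ℝ) (A C : Matrix n n 𝕜) :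
    star (perspectiveFactor r t A C) =
      √t • (cfc (fun x : ℝ => x ^ (-1 / 2 : ℝ)) C * cfc (fun x : ℝ => x ^ r) A) := by
  simp [perspectiveFactor, star_smul, (cfc_predicate _ A : IsSelfAdjoint _).star_eq,
    (cfc_predicate _ C : IsSelfAdjoint _).star_eq]

theorem PosDef.star_perspectiveFactor_mul_perspectiveFactor {A : Matrix n n 𝕜} (hA : A.PosDef)
    (r s t u : ℝ) (C D : Matrix n n 𝕜) :
    star (perspectiveFactor r t A C) * perspectiveFactor s u A D =
      (√t * √u) • (cfc (fun x : ℝ => x ^ (-1 / 2 : ℝ)) C * cfc (fun x : ℝ => x ^ (r + s)) A *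
        cfc (fun x : ℝ => x ^ (-1 / 2 : ℝ)) D) := by
  rw [star_perspectiveFactor, perspectiveFactor, smul_mul_smul_comm, mul_assoc,
    ← mul_assoc (cfc _ A), hA.cfc_rpow_mul_cfc_rpow, ← mul_assoc]

theorem PosDef.cfc_rpow_mul_perspectiveFactor {A : Matrix n n 𝕜} (hA : A.PosDef) (p r t : ℝ)
    (C : Matrix n n 𝕜) :
    cfc (fun x : ℝ => x ^ p) A * perspectiveFactor r t A C = perspectiveFactor (p + r) t A C := by
  rw [perspectiveFactor, perspectiveFactor, mul_smul_comm, ← mul_assoc, hA.cfc_rpow_mul_cfc_rpow]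

theorem PosDef.perspectiveFactor_mul_cfc_rpow {C : Matrix n n 𝕜} (hC : C.PosDef) (r t : ℝ)
    (A : Matrix n n 𝕜) :
    perspectiveFactor r t A C * cfc (fun x : ℝ => x ^ (1 / 2 : ℝ)) C =
      √t • cfc (fun x : ℝ => x ^ r) A := by
  rw [perspectiveFactor, smul_mul_assoc, mul_assoc, hC.cfc_rpow_mul_cfc_rpow]
  norm_num [cfc_const_one ℝ C hC.1.isSelfAdjoint]

theorem PosDef.exists_fromBlocks_perspectiveFactor_mem_unitary {A B : Matrix n n 𝕜} (hA : A.PosDef)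
    (hB : B.PosDef) {t : ℝ} (ht0 : 0 ≤ t) (ht1 : t ≤ 1) :
    ∃ Z₁ Z₂ : Matrix n n 𝕜,
      fromBlocks (perspectiveFactor (1 / 2) t A (t • A + (1 - t) • B)) Z₁
        (perspectiveFactor (1 / 2) (1 - t) B (t • A + (1 - t) • B)) Z₂ ∈
        unitary (Matrix (n ⊕ n) (n ⊕ n) 𝕜) := by
  set C := t • A + (1 - t) • B with hC_def
  set D := (1 - t) • cfc (fun x : ℝ => x ^ (-1 : ℝ)) A + t • cfc (fun x : ℝ => x ^ (-1 : ℝ)) B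
    with hD_def
  have hC : C.PosDef := hA.smul_add_one_sub_smul hB ht0 ht1
  have hD : D.PosDef := by
    simpa using (hA.cfc_rpow (-1)).smul_add_one_sub_smul (hB.cfc_rpow (-1)) (sub_nonneg.2 ht1)
      (sub_le_self _ ht0)
  -- The second column is orthogonal to the first: the cross terms `∓ √t √(1-t) C^(-1/2) D^(-1/2)`
  -- cancel because `A^(1/2) A^(-1/2) = B^(1/2) B^(-1/2) = 1`.
  refine ⟨-perspectiveFactor (-1 / 2) (1 - t) A D, perspectiveFactor (-1 / 2) t B D,
    (mem_unitaryGroup_iff' ..).mpr ?_⟩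
  have hTCT := hC.cfc_rpow_mul_mul_cfc_rpow (-1 / 2) (-1 / 2)
  have hRDR := hD.cfc_rpow_mul_mul_cfc_rpow (-1 / 2) (-1 / 2)
  norm_num [cfc_const_one ℝ C hC.1.isSelfAdjoint, cfc_const_one ℝ D hD.1.isSelfAdjoint] at hTCT hRDR
  rw [star_eq_conjTranspose, fromBlocks_conjTranspose, fromBlocks_multiply]
  simp only [← star_eq_conjTranspose, star_neg, neg_mul, mul_neg,
    hA.star_perspectiveFactor_mul_perspectiveFactor,
    hB.star_perspectiveFactor_mul_perspectiveFactor,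
    Real.mul_self_sqrt ht0, Real.mul_self_sqrt (sub_nonneg.2 ht1)]
  norm_num [cfc_id' ℝ A hA.1.isSelfAdjoint, cfc_id' ℝ B hB.1.isSelfAdjoint,
    cfc_const_one ℝ A hA.1.isSelfAdjoint, cfc_const_one ℝ B hB.1.isSelfAdjoint]
  rw [← fromBlocks_one]
  congr 1
  · refine Eq.trans ?_ hTCT
    simp only [hC_def, mul_add, add_mul, mul_smul_comm, smul_mul_assoc]
  · rw [mul_comm √(1 - t), neg_add_cancel]
  · rw [mul_comm √(1 - t), neg_add_cancel]
  · refine Eq.trans ?_ hRDR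
    simp only [hD_def, mul_add, add_mul, mul_smul_comm, smul_mul_assoc]

theorem PosDef.star_perspectiveFactor_mul_cfc_inv_mul {A C : Matrix n n 𝕜} (hA : A.PosDef)
    (hC : C.PosDef) {t : ℝ} (ht : 0 ≤ t) :
    star (perspectiveFactor (1 / 2) t A C) * cfc (fun x : ℝ => x ^ (-1 : ℝ)) A *
        perspectiveFactor (1 / 2) t A C = t • cfc (fun x : ℝ => x ^ (-1 : ℝ)) C := by
  rw [mul_assoc, hA.cfc_rpow_mul_perspectiveFactor, hA.star_perspectiveFactor_mul_perspectiveFactor,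
    Real.mul_self_sqrt ht, show (1 / 2 + (-1 + 1 / 2) : ℝ) = 0 by norm_num]
  simp only [Real.rpow_zero, cfc_const_one ℝ A hA.1.isSelfAdjoint, mul_one,
    hC.cfc_rpow_mul_cfc_rpow]
  norm_num

theorem PosDef.cfc_rpow_half_mul_star_perspectiveFactor_mul_mul {A C : Matrix n n 𝕜}
    (hC : C.PosDef) {t : ℝ} (ht : 0 ≤ t) (F : Matrix n n 𝕜) :
    cfc (fun x : ℝ => x ^ (1 / 2 : ℝ)) C *
        (star (perspectiveFactor (1 / 2) t A C) * F * perspectiveFactor (1 / 2) t A C) *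
        cfc (fun x : ℝ => x ^ (1 / 2 : ℝ)) C =
      t • (cfc (fun x : ℝ => x ^ (1 / 2 : ℝ)) A * F * cfc (fun x : ℝ => x ^ (1 / 2 : ℝ)) A) := by
  have hXS := hC.perspectiveFactor_mul_cfc_rpow (1 / 2) t A
  have hSX : cfc (fun x : ℝ => x ^ (1 / 2 : ℝ)) C * star (perspectiveFactor (1 / 2) t A C) =
      √t • cfc (fun x : ℝ => x ^ (1 / 2 : ℝ)) A := by
    simpa [star_smul, (cfc_predicate _ A : IsSelfAdjoint _).star_eq,
      (cfc_predicate _ C : IsSelfAdjoint _).star_eq] using congrArg star hXS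
  rw [← mul_assoc, ← mul_assoc, hSX, mul_assoc, hXS]
  simp only [smul_mul_assoc, mul_smul_comm, smul_smul, Real.mul_self_sqrt ht, mul_assoc]

end Matrix

/-- if `f` is operator convex on `(0,∞)`, so is `g x = x * f (1/x)`. -/
theorem operatorConvexOn_transpose (f : ℝ → ℝ)
    (hf : OperatorConvexOn (Set.Ioi 0) f) :
    OperatorConvexOn (Set.Ioi 0) (fun x => x * f (1 / x)) := by
  rw [operatorConvexOn_iff]
  intro ι _ _ A B hA hB hAI hBI t ht0 ht1
  have hA' := posDef_iff_isHermitian_and_spectrum_subset_Ioi.mpr ⟨hA, hAI⟩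
  have hB' := posDef_iff_isHermitian_and_spectrum_subset_Ioi.mpr ⟨hB, hBI⟩
  have hC := hA'.smul_add_one_sub_smul hB' ht0 ht1
  have hAinv := posDef_iff_isHermitian_and_spectrum_subset_Ioi.mp (hA'.cfc_rpow (-1))
  have hBinv := posDef_iff_isHermitian_and_spectrum_subset_Ioi.mp (hB'.cfc_rpow (-1))
  obtain ⟨Z₁, Z₂, hW⟩ := hA'.exists_fromBlocks_perspectiveFactor_mem_unitary hB' ht0 ht1
  have key := (hf.posSemidef_jensen hW hAinv.1 hBinv.1 hAinv.2 hBinv.2).conjTranspose_mul_mul_same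
    (cfc (fun x : ℝ => x ^ (1 / 2 : ℝ)) (t • A + (1 - t) • B))
  rwa [hA'.star_perspectiveFactor_mul_cfc_inv_mul hC ht0,
    hB'.star_perspectiveFactor_mul_cfc_inv_mul hC (sub_nonneg.2 ht1), ← add_smul, add_sub_cancel,
    one_smul, ← star_eq_conjTranspose, (cfc_predicate _ _ : IsSelfAdjoint _).star_eq, mul_sub,
    sub_mul, mul_add, add_mul, hC.cfc_rpow_half_mul_star_perspectiveFactor_mul_mul ht0,
    hC.cfc_rpow_half_mul_star_perspectiveFactor_mul_mul (sub_nonneg.2 ht1),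
    ← hA'.cfc_mul_apply_one_div, ← hB'.cfc_mul_apply_one_div, ← hC.cfc_mul_apply_one_div] at key
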